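/- arXiv:1908.09308 — 5 statements merged into one kernel-verified Lean document; each statement's English description precedes it below -/
import Mathlib

section
/- Let (X,S) be a semigroup right act and define x ≤_S y iff there exists s ∈ S with xs = y. Then ≤_S is a partial order on X if and only if the act is s-unital (for all x ∈ X there exists s ∈ S with xs = x) and acyclic (for all x ∈ X and s, s' ∈ S, x = x·(s·s') implies x = x·s). -/
section RightAct

variable {X S : Type*} [Semigroup S] {act : X → S → X}

theorem exists_act_eq_trans (hact : ∀ (x : X) (s s' : S), act (act x s) s' = act x (s * s'))
    {x y z : X} : (∃ s, act x s = y) → (∃ t, act y t = z) → ∃ u, act x u = z := by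
  rintro ⟨s, rfl⟩ ⟨t, rfl⟩
  exact ⟨s * t, (hact x s t).symm⟩

/-- A cycle `x·(s·s') = x` is exactly the pair `x ≤_S x·s ≤_S x`. -/
theorem exists_act_eq_antisymm_iff
    (hact : ∀ (x : X) (s s' : S), act (act x s) s' = act x (s * s')) :
    (∀ x y : X, (∃ s, act x s = y) → (∃ t, act y t = x) → x = y) ↔
      ∀ (x : X) (s s' : S), act x (s * s') = x → act x s = x := by
  constructor
  · intro h x s s' hcycle
    exact (h x (act x s) ⟨s, rfl⟩ ⟨s', (hact x s s').trans hcycle⟩).symm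
  · rintro h x _ ⟨s, rfl⟩ ⟨t, hcycle⟩
    exact (h x s t ((hact x s t).symm.trans hcycle)).symm

end RightAct

/-- For a semigroup right act (X,S), the relation
`x ≤_S y ↔ ∃ s, x·s = y` is a partial order on X iff the act is
s-unital and acyclic. -/
theorem semigroup_act_partialOrder_iff
    (X S : Type) [Semigroup S] (act : X → S → X)
    (hact : ∀ (x : X) (s s' : S), act (act x s) s' = act x (s * s')) :
    IsPartialOrder X (fun x y => ∃ s : S, act x s = y) ↔
      ((∀ x : X, ∃ s : S, act x s = x) ∧
        (∀ (x : X) (s s' : S), act x (s * s') = x → act x s = x)) := by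
  constructor
  · intro h
    exact ⟨h.refl, (exists_act_eq_antisymm_iff hact).1 h.antisymm⟩
  · rintro ⟨hunital, hacyclic⟩
    exact
      { refl := hunital
        trans := fun _ _ _ => exists_act_eq_trans hact
        antisymm := (exists_act_eq_antisymm_iff hact).2 hacyclic }
end

section
/- A poset P is a full monoid poset (P ≅ P(M,M) for a monoid M) if and only if P is a semigroup poset (P ≅ P(T,S) for some semigroups S < T) having a global minimum. -/
/-!
If `P(T,S)` has a least element `c`, then every `t` is `c * p` with `p ∈ S`. Writing `c = c * p₀`
and `p₀ = c * p₁` gives `c * c ≤ c`, so `c` is idempotent and hence a left identity; then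
`t = c * p = p` shows `S = T`, and antisymmetry together with `t ≤ t` makes `c` a right identity.
-/

/-- P is a full monoid poset: P ≅ P(M,M) for a monoid M,
ordered by s ≤ t iff ∃ m ∈ M, s·m = t. -/
def IsFullMonoidPoset (α : Type) [PartialOrder α] : Prop :=
  ∃ (M : Type) (mul : M → M → M) (one : M) (e : α ≃ M),
    (∀ a b c : M, mul (mul a b) c = mul a (mul b c)) ∧
    (∀ a : M, mul one a = a) ∧ (∀ a : M, mul a one = a) ∧
    (∀ x y : α, x ≤ y ↔ ∃ m : M, mul (e x) m = e y)

/-- P is a semigroup poset: P ≅ P(T,S) for a semigroup T and subsemigroup S. -/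
def IsSemigroupPoset (α : Type) [PartialOrder α] : Prop :=
  ∃ (T : Type) (mul : T → T → T) (S : Set T) (e : α ≃ T),
    (∀ a b c : T, mul (mul a b) c = mul a (mul b c)) ∧
    (∀ a ∈ S, ∀ b ∈ S, mul a b ∈ S) ∧
    (∀ x y : α, x ≤ y ↔ ∃ s ∈ S, mul (e x) s = e y)

namespace IsBot

variable {T : Type*} [Semigroup T] [PartialOrder T] {S : Set T} {c : T}

theorem isIdempotentElem (hc : IsBot c)
    (hle : ∀ t u : T, t ≤ u ↔ ∃ s ∈ S, t * s = u) : IsIdempotentElem c := by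
  obtain ⟨p₀, -, hp₀⟩ := (hle c c).1 le_rfl
  obtain ⟨p₁, hp₁S, hp₁⟩ := (hle c p₀).1 (hc p₀)
  refine le_antisymm ((hle _ _).2 ⟨p₁, hp₁S, ?_⟩) (hc _)
  rw [mul_assoc, hp₁, hp₀]

theorem mul_eq_right (hc : IsBot c)
    (hle : ∀ t u : T, t ≤ u ↔ ∃ s ∈ S, t * s = u) (t : T) : c * t = t := by
  obtain ⟨p, -, rfl⟩ := (hle c t).1 (hc t)
  rw [← mul_assoc, hc.isIdempotentElem hle]

theorem eq_univ (hc : IsBot c)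
    (hle : ∀ t u : T, t ≤ u ↔ ∃ s ∈ S, t * s = u) : S = Set.univ := by
  refine Set.eq_univ_of_forall fun t => ?_
  obtain ⟨p, hpS, rfl⟩ := (hle c t).1 (hc t)
  rwa [hc.mul_eq_right hle]

theorem mul_eq_left (hc : IsBot c)
    (hle : ∀ t u : T, t ≤ u ↔ ∃ s ∈ S, t * s = u) (t : T) : t * c = t := by
  obtain ⟨w, hwS, hw⟩ := (hle t t).1 le_rfl
  have hcS : c ∈ S := hc.eq_univ hle ▸ Set.mem_univ c
  refine le_antisymm ((hle _ _).2 ⟨w, hwS, ?_⟩) ((hle _ _).2 ⟨c, hcS, rfl⟩)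
  rw [mul_assoc, hc.mul_eq_right hle, hw]

end IsBot

theorem IsFullMonoidPoset.isSemigroupPoset {α : Type} [PartialOrder α]
    (h : IsFullMonoidPoset α) : IsSemigroupPoset α := by
  obtain ⟨M, mul, -, e, hassoc, -, -, horder⟩ := h
  exact ⟨M, mul, Set.univ, e, hassoc, fun _ _ _ _ => trivial, by simpa using horder⟩

theorem IsFullMonoidPoset.exists_isBot {α : Type} [PartialOrder α]
    (h : IsFullMonoidPoset α) : ∃ b : α, ∀ x : α, b ≤ x := by
  obtain ⟨M, mul, one, e, -, hone, -, horder⟩ := h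
  exact ⟨e.symm one, fun x => (horder _ _).2 ⟨e x, by rw [e.apply_symm_apply, hone]⟩⟩

theorem IsSemigroupPoset.isFullMonoidPoset {α : Type} [PartialOrder α]
    (h : IsSemigroupPoset α) {b : α} (hb : ∀ x : α, b ≤ x) : IsFullMonoidPoset α := by
  obtain ⟨T, mul, S, e, hassoc, -, horder⟩ := h
  let : Semigroup T := { mul := mul, mul_assoc := hassoc }
  let : PartialOrder T := PartialOrder.lift e.symm e.symm.injective
  have hle (t u : T) : t ≤ u ↔ ∃ s ∈ S, t * s = u := by
    show e.symm t ≤ e.symm u ↔ ∃ s ∈ S, mul t s = u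
    simpa using horder (e.symm t) (e.symm u)
  have hc : IsBot (e b) := fun t => show e.symm (e b) ≤ e.symm t by simpa using hb _
  refine ⟨T, mul, e b, e, hassoc, hc.mul_eq_right hle, hc.mul_eq_left hle, fun x y => ?_⟩
  simp [horder, hc.eq_univ hle]

/-- A poset is a full monoid poset iff it is a semigroup poset
with a global minimum. -/
theorem isFullMonoidPoset_iff (α : Type) [PartialOrder α] :
    IsFullMonoidPoset α ↔ (IsSemigroupPoset α ∧ ∃ b : α, ∀ x : α, b ≤ x) :=
  ⟨fun h => ⟨h.isSemigroupPoset, h.exists_isBot⟩,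
    fun ⟨h, _, hb⟩ => h.isFullMonoidPoset hb⟩
end

section
/- The poset on the set {0,2,3,4,5,6} ordered by a < b iff b − a ≥ 2 is not a semigroup poset: there exist no semigroups S < T with this poset isomorphic to P(T,S). (More generally this holds for the set {0,2,3,...,c} for any c ≥ 6.) -/
/-!
If `P(T, S)` has a minimum `m`, left multiplication by `m` maps `S` onto the finite set `T`, so
`S = T` and `m * ·` is a bijection of `T`; this produces a left identity, which antisymmetry makes
two-sided. So `T` becomes a monoid whose divisibility order is the gap order on `{0, 2, …, c}`.
Writing 4, 5 and 6 as multiples of 2 leaves two possibilities. If `2 * 2 = 2`, then 2 fixes all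
its multiples, which forces `2 * 3 = 2` and then `2 * (3 * 4) = 4`, impossible as `3 * 4` is 3 or
a multiple of 2. If `2 * 2 = 4` and `2 * 3 = 5`, left multiplication by 2 is the shift
`n ↦ n + 2` below the top, so every multiple of `x` has the parity of `x`, contradicting `3 ∣ 6`.
-/

lemma IsIdempotentElem.mul_eq_right_of_dvd {M : Type*} [Semigroup M] {a b : M}
    (ha : IsIdempotentElem a) (hb : a ∣ b) : a * b = b := by
  obtain ⟨w, rfl⟩ := hb
  rw [← mul_assoc, ha.eq]

section SemigroupPoset

variable {T : Type*} [Semigroup T]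

lemma eq_univ_of_forall_exists_mem_mul_eq [Finite T] {S : Set T} {m : T}
    (hm : ∀ t, ∃ s ∈ S, m * s = t) : S = Set.univ := by
  choose f hfS hf using hm
  have hsurj := Finite.injective_iff_surjective.1 (Function.LeftInverse.injective hf)
  refine Set.eq_univ_of_forall fun t => ?_
  obtain ⟨t', rfl⟩ := hsurj t
  exact hfS t'

lemma exists_forall_mul_eq_right_of_surjective [Finite T] {m : T}
    (hm : Function.Surjective (m * ·)) : ∃ u : T, ∀ t, u * t = t := by
  have hinj := Finite.injective_iff_surjective.2 hm
  obtain ⟨u, hu : m * u = m⟩ := hm m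
  exact ⟨u, fun t => hinj (show m * (u * t) = m * t by rw [← mul_assoc, hu])⟩

lemma mul_eq_left_of_forall_mul_eq_right {u : T} (hu : ∀ t, u * t = t)
    (hrefl : ∀ t : T, ∃ s, t * s = t)
    (hanti : ∀ t t' : T, (∃ s, t * s = t') → (∃ s, t' * s = t) → t = t') (t : T) :
    t * u = t := by
  obtain ⟨s, hs⟩ := hrefl t
  exact hanti _ _ ⟨s, by rw [mul_assoc, hu, hs]⟩ ⟨u, rfl⟩

end SemigroupPoset

abbrev StarInterval (c : ℕ) := {n : ℕ // n = 0 ∨ (2 ≤ n ∧ n ≤ c)}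

namespace StarInterval

instance (c : ℕ) : Finite (StarInterval c) :=
  Set.Finite.to_subtype ((Set.finite_Iic c).subset fun n (hn : n = 0 ∨ _) => show n ≤ c by omega)

-- The default proof uses a hypothesis `hc : k ≤ c` of the calling context, for a numeral `k ≥ n`.
def of (c n : ℕ)
    (h : n = 0 ∨ (2 ≤ n ∧ n ≤ c) := by exact .inr ⟨by norm_num, le_trans (by norm_num) hc⟩) :
    StarInterval c :=
  ⟨n, h⟩

@[simp]
lemma val_of {c n : ℕ} (h : n = 0 ∨ (2 ≤ n ∧ n ≤ c)) : (of c n h : ℕ) = n := rfl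

-- In a monoid `M`, `P(M, M)` is the divisibility order.
def IsGapMonoid (c : ℕ) [Monoid (StarInterval c)] : Prop :=
  ∀ x y : StarInterval c, x ∣ y ↔ (x : ℕ) = y ∨ (x : ℕ) + 2 ≤ y

variable {c : ℕ} [Monoid (StarInterval c)]

lemma val_le_val_mul (h : IsGapMonoid c) (x a : StarInterval c) :
    (x : ℕ) = ↑(x * a) ∨ (x : ℕ) + 2 ≤ ↑(x * a) :=
  (h _ _).1 (dvd_mul_right x a)

lemma eq_one_of_val_eq_zero (h : IsGapMonoid c) (hc : 3 ≤ c) {x : StarInterval c}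
    (hx : (x : ℕ) = 0) : x = 1 := by
  have h2 := (h 1 (of c 2)).1 (one_dvd _)
  have h3 := (h 1 (of c 3)).1 (one_dvd _)
  have h1 := (1 : StarInterval c).2
  simp only [val_of] at h2 h3
  exact Subtype.ext (by omega)

lemma mul_eq_left_of_lt (h : IsGapMonoid c) {x : StarInterval c} (hx : c < x + 2)
    (a : StarInterval c) : x * a = x := by
  have := val_le_val_mul h x a
  have := (x * a).2
  exact Subtype.ext (by omega)

lemma two_mul_two_dvd_or_eq_two_mul_three (h : IsGapMonoid c) (hc : 3 ≤ c) {y : StarInterval c}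
    (hy : 4 ≤ (y : ℕ)) : of c 2 * of c 2 ∣ y ∨ y = of c 2 * of c 3 := by
  obtain ⟨a, rfl⟩ := (h (of c 2) y).2 (Or.inr hy)
  obtain ha | ha | ha | ha : (a : ℕ) = 0 ∨ (a : ℕ) = 2 ∨ (a : ℕ) = 3 ∨ 4 ≤ (a : ℕ) := by
    have := a.2
    omega
  · rw [eq_one_of_val_eq_zero h (by omega) ha, mul_one, val_of] at hy
    omega
  · obtain rfl : a = of c 2 := Subtype.ext ha
    exact .inl dvd_rfl
  · obtain rfl : a = of c 3 := Subtype.ext ha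
    exact .inr rfl
  · exact .inl (mul_dvd_mul_left _ ((h _ _).2 (.inr ha)))

lemma val_two_mul_two_eq_two_or (h : IsGapMonoid c) (hc : 6 ≤ c) :
    ((of c 2 * of c 2 : StarInterval c) : ℕ) = 2 ∨
      ((of c 2 * of c 2 : StarInterval c) : ℕ) = 4 ∧
        ((of c 2 * of c 3 : StarInterval c) : ℕ) = 5 := by
  have key (y : StarInterval c) (hy : 4 ≤ (y : ℕ)) :
      (((of c 2 * of c 2 : StarInterval c) : ℕ) = y ∨
        ((of c 2 * of c 2 : StarInterval c) : ℕ) + 2 ≤ y) ∨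
        (y : ℕ) = ↑(of c 2 * of c 3) :=
    (two_mul_two_dvd_or_eq_two_mul_three h (by omega) hy).imp (h _ _).1 (congrArg Subtype.val)
  have h4 := key (of c 4) (by simp)
  have h5 := key (of c 5) (by simp)
  have h6 := key (of c 6) (by simp)
  have hk := val_le_val_mul h (of c 2) (of c 2)
  simp only [val_of] at *
  omega


lemma val_two_mul_three_eq_two (h : IsGapMonoid c) (hc : 6 ≤ c)
    (hk : IsIdempotentElem (of c 2)) : ((of c 2 * of c 3 : StarInterval c) : ℕ) = 2 := by
  have hdvd (y : StarInterval c) (hy : 5 ≤ (y : ℕ)) : of c 2 * of c 3 ∣ y := by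
    obtain ⟨w, hw⟩ := (h (of c 3) y).2 (.inr hy)
    refine ⟨w, ?_⟩
    rw [mul_assoc, ← hw, hk.mul_eq_right_of_dvd ((h _ _).2 (.inr (by simp; omega)))]
  have h5 := (h _ _).1 (hdvd (of c 5) (by simp))
  have h6 := (h _ _).1 (hdvd (of c 6) (by simp))
  have hq := val_le_val_mul h (of c 2) (of c 3)
  simp only [val_of] at *
  omega

lemma false_of_two_mul_two_eq_two (h : IsGapMonoid c) (hc : 6 ≤ c)
    (hk : ((of c 2 * of c 2 : StarInterval c) : ℕ) = 2) : False := by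
  have hidem : IsIdempotentElem (of c 2) := Subtype.ext hk
  have hq : of c 2 * of c 3 = of c 2 := Subtype.ext (val_two_mul_three_eq_two h hc hidem)
  have hz : of c 2 * (of c 3 * of c 4) = of c 4 := by
    rw [← mul_assoc, hq, hidem.mul_eq_right_of_dvd ((h _ _).2 (.inr (by simp)))]
  rcases val_le_val_mul h (of c 3) (of c 4) with hz3 | hz5
  · rw [← Subtype.ext hz3, hq] at hz
    simpa using congrArg Subtype.val hz
  · simp only [val_of] at hz5
    rw [hidem.mul_eq_right_of_dvd ((h _ _).2 (.inr (by simp; omega)))] at hz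
    simp [hz] at hz5

lemma val_two_mul_eq_add_two (h : IsGapMonoid c) (hc : 3 ≤ c)
    (hk : ((of c 2 * of c 2 : StarInterval c) : ℕ) = 4)
    (hq : ((of c 2 * of c 3 : StarInterval c) : ℕ) = 5) (x : StarInterval c)
    (hx : 2 ≤ (x : ℕ)) (hxc : (x : ℕ) + 2 ≤ c) : ((of c 2 * x : StarInterval c) : ℕ) = x + 2 := by
  induction hn : (x : ℕ) using Nat.strong_induction_on generalizing x with
  | _ n ih =>
  obtain rfl | rfl | hn4 : n = 2 ∨ n = 3 ∨ 4 ≤ n := by omega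
  · rwa [show x = of c 2 from Subtype.ext hn]
  · rwa [show x = of c 3 from Subtype.ext hn]
  have hn2 : n + 2 = 0 ∨ 2 ≤ n + 2 ∧ n + 2 ≤ c := .inr ⟨by omega, by omega⟩
  obtain ⟨w, hw⟩ := (h (of c 2) (of c (n + 2) hn2)).2 (.inr (by simp; omega))
  have hwv := congrArg Subtype.val hw
  simp only [val_of] at hwv
  obtain hw0 | hwlt | hwn | hwgt :
      (w : ℕ) = 0 ∨ (2 ≤ (w : ℕ) ∧ (w : ℕ) < n) ∨ (w : ℕ) = n ∨ n < w := by
    have := w.2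
    omega
  · rw [eq_one_of_val_eq_zero h (by omega) hw0, mul_one, val_of] at hwv
    omega
  · have := ih w hwlt.2 w hwlt.1 (by omega) rfl
    omega
  · rw [show x = w from Subtype.ext (hn.trans hwn.symm)]
    omega
  · have hm : n - 1 = 0 ∨ 2 ≤ n - 1 ∧ n - 1 ≤ c := .inr ⟨by omega, by omega⟩
    have hdvd := mul_dvd_mul_left (of c 2) ((h (of c (n - 1) hm) w).2 (.inr (by simp; omega)))
    have := ih (n - 1) (by omega) (of c (n - 1) hm) (by simp; omega) (by simp; omega) rfl
    have := (h _ _).1 hdvd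
    omega

lemma two_mul_eq_left_of_lt (h : IsGapMonoid c) (hc : 5 ≤ c)
    (hadd : ∀ x : StarInterval c, 2 ≤ (x : ℕ) → (x : ℕ) + 2 ≤ c →
      ((of c 2 * x : StarInterval c) : ℕ) = x + 2)
    {x : StarInterval c} (hx : c < x + 2) : of c 2 * x = x := by
  have := x.2
  obtain ⟨y, hy⟩ : ∃ y : StarInterval c, (y : ℕ) = x - 2 := ⟨⟨x - 2, by omega⟩, rfl⟩
  have hy : of c 2 * y = x := Subtype.ext (by rw [hadd y (by omega) (by omega)]; omega)
  obtain ⟨w, hw⟩ := (h y x).2 (.inr (by omega))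
  calc of c 2 * x = of c 2 * y * w := by rw [mul_assoc, ← hw]
    _ = x := by rw [hy, mul_eq_left_of_lt h hx]

lemma val_two_mul_mod_two (h : IsGapMonoid c) (hc : 5 ≤ c)
    (hadd : ∀ x : StarInterval c, 2 ≤ (x : ℕ) → (x : ℕ) + 2 ≤ c →
      ((of c 2 * x : StarInterval c) : ℕ) = x + 2)
    (x : StarInterval c) : ((of c 2 * x : StarInterval c) : ℕ) % 2 = (x : ℕ) % 2 := by
  obtain hx | hx | hx : (x : ℕ) = 0 ∨ (2 ≤ (x : ℕ) ∧ (x : ℕ) + 2 ≤ c) ∨ c < x + 2 := by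
    have := x.2
    omega
  · rw [hx, eq_one_of_val_eq_zero h (by omega) hx, mul_one, val_of]
  · rw [hadd x hx.1 hx.2, Nat.add_mod_right]
  · rw [two_mul_eq_left_of_lt h hc hadd hx]

lemma val_mul_mod_two (h : IsGapMonoid c) (hc : 5 ≤ c)
    (hadd : ∀ x : StarInterval c, 2 ≤ (x : ℕ) → (x : ℕ) + 2 ≤ c →
      ((of c 2 * x : StarInterval c) : ℕ) = x + 2)
    (x : StarInterval c) (hx : 2 ≤ (x : ℕ)) (a : StarInterval c) :
    ((x * a : StarInterval c) : ℕ) % 2 = (x : ℕ) % 2 := by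
  induction hn : c - (x : ℕ) using Nat.strong_induction_on generalizing x with
  | _ n ih =>
  by_cases hxc : c < x + 2
  · rw [mul_eq_left_of_lt h hxc]
  have hy := hadd x hx (by omega)
  have := ih (c - (x + 2)) (by omega) (of c 2 * x) (by omega) (by omega)
  rwa [mul_assoc, val_two_mul_mod_two h hc hadd, hy, Nat.add_mod_right] at this

lemma false_of_two_mul_two_eq_four (h : IsGapMonoid c) (hc : 6 ≤ c)
    (hk : ((of c 2 * of c 2 : StarInterval c) : ℕ) = 4)
    (hq : ((of c 2 * of c 3 : StarInterval c) : ℕ) = 5) : False := by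
  have hadd := val_two_mul_eq_add_two h (by omega) hk hq
  obtain ⟨a, ha⟩ := (h (of c 3) (of c 6)).2 (.inr (by simp))
  have := val_mul_mod_two h (by omega) hadd (of c 3) (by simp) a
  rw [← ha] at this
  simp at this

theorem not_isGapMonoid (hc : 6 ≤ c) : ¬ IsGapMonoid c := fun h =>
  (val_two_mul_two_eq_two_or h hc).elim (false_of_two_mul_two_eq_two h hc)
    fun ⟨hk, hq⟩ => false_of_two_mul_two_eq_four h hc hk hq

end StarInterval

/-- For every c ≥ 6, the poset on {0, 2, 3, …, c} ordered by
a ≤ b iff a = b or b - a ≥ 2 is not a semigroup poset: there are no semigroups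
S < T with this poset isomorphic to P(T,S). In particular this holds for
{0,2,3,4,5,6}. -/
theorem gap_order_on_star_interval_not_semigroup_poset (c : ℕ) (hc : 6 ≤ c) :
    ¬ ∃ (T : Type) (mul : T → T → T) (S : Set T)
        (e : {n : ℕ // n = 0 ∨ (2 ≤ n ∧ n ≤ c)} ≃ T),
        (∀ a b d : T, mul (mul a b) d = mul a (mul b d)) ∧
        (∀ a ∈ S, ∀ b ∈ S, mul a b ∈ S) ∧
        (∀ x y : {n : ℕ // n = 0 ∨ (2 ≤ n ∧ n ≤ c)},
          ((x : ℕ) = (y : ℕ) ∨ (x : ℕ) + 2 ≤ (y : ℕ)) ↔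
            ∃ s ∈ S, mul (e x) s = e y) := by
  rintro ⟨T, mul, S, e, hassoc, -, hiff⟩
  let _ : Semigroup T := { mul := mul, mul_assoc := hassoc }
  change ∀ x y, _ ↔ ∃ s ∈ S, e x * s = e y at hiff
  have : Finite T := .of_equiv _ e
  have hmin (t : T) : ∃ s ∈ S, e (StarInterval.of c 0 (.inl rfl)) * s = t := by
    simpa using (hiff _ (e.symm t)).1 (by have := (e.symm t).2; simp; omega)
  obtain rfl : S = Set.univ := eq_univ_of_forall_exists_mem_mul_eq hmin
  simp only [Set.mem_univ, true_and] at hiff hmin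
  obtain ⟨u, hu⟩ := exists_forall_mul_eq_right_of_surjective hmin
  have hu' := mul_eq_left_of_forall_mul_eq_right hu
    (fun t => by simpa using (hiff (e.symm t) (e.symm t)).1 (.inl rfl))
    (fun t t' h h' => by
      have h1 := (hiff (e.symm t) (e.symm t')).2 (by simpa using h)
      have h2 := (hiff (e.symm t') (e.symm t)).2 (by simpa using h')
      exact e.symm.injective (Subtype.ext (by omega)))
  let _ : Monoid T := { one := u, one_mul := hu, mul_one := hu' }
  let _ := e.monoid
  refine StarInterval.not_isGapMonoid hc fun x y => ?_
  rw [← map_dvd_iff e.mulEquiv, hiff]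
  simp [Dvd.dvd, eq_comm]
end

section
/- Let P ≅ P(T,S) be a semigroup poset and Q ≅ P(S',S') a full semigroup poset. Then the series composition P * Q (all elements of P below all elements of Q) is a semigroup poset, realized on T ∪ S' with mixed products tt' = t't = t' for t ∈ T, t' ∈ S'; moreover if P is full (resp. a monoid poset) then so is P * Q. -/
/-- The mixed product on T ⊕ S' for the series composition: products within T
and S' are unchanged; for t ∈ T, t' ∈ S' one has tt' = t't = t'. -/
def serMul {T S' : Type} (mul : T → T → T) (mul' : S' → S' → S') :
    T ⊕ S' → T ⊕ S' → T ⊕ S'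
  | Sum.inl a, Sum.inl b => Sum.inl (mul a b)
  | Sum.inl _, Sum.inr b => Sum.inr b
  | Sum.inr a, Sum.inl _ => Sum.inr a
  | Sum.inr a, Sum.inr b => Sum.inr (mul' a b)

/-!
Elements of `S'` absorb those of `T`, so `serMul` is the ordinal sum of the two semigroups and
hence associative. In the order induced by `S ∪ S'`: inside `T` nothing changes; `t ≤ t'` for
`t ∈ T`, `t' ∈ S'`, with witness `t'` itself; no product starting in `S'` returns to `T`; and
inside `S'` the elements of `S` only contribute the pairs `t' ≤ t'`, which the order of `S'`
already contains because it is reflexive.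
-/

section SeriesComposition

variable {T S' : Type}

def seriesSub (S : Set T) : Set (T ⊕ S') :=
  Sum.inl '' S ∪ Set.range Sum.inr

theorem seriesSub_univ : seriesSub (Set.univ : Set T) = (Set.univ : Set (T ⊕ S')) := by
  ext (a | a) <;> simp [seriesSub]

variable [Semigroup T] [Semigroup S']

local infixl:70 " ⋆ " => serMul (T := T) (S' := S') (· * ·) (· * ·)

theorem serMul_assoc (a b c : T ⊕ S') : a ⋆ b ⋆ c = a ⋆ (b ⋆ c) := by
  rcases a with a | a <;> rcases b with b | b <;> rcases c with c | c <;>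
    simp [serMul, mul_assoc]

theorem serMul_mem_seriesSub {S : Subsemigroup T} {a b : T ⊕ S'}
    (ha : a ∈ seriesSub (S : Set T)) (hb : b ∈ seriesSub (S : Set T)) :
    a ⋆ b ∈ seriesSub (S : Set T) := by
  rcases ha with ⟨s, hs, rfl⟩ | ⟨s, rfl⟩ <;> rcases hb with ⟨u, hu, rfl⟩ | ⟨u, rfl⟩
  · exact Or.inl ⟨s * u, S.mul_mem hs hu, rfl⟩
  · exact Or.inr ⟨u, rfl⟩
  · exact Or.inr ⟨s, rfl⟩
  · exact Or.inr ⟨s * u, rfl⟩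

variable {S : Set T}

theorem exists_serMul_inl_inl_iff {a b : T} :
    (∃ s ∈ seriesSub S, Sum.inl a ⋆ s = (Sum.inl b : T ⊕ S')) ↔ ∃ s ∈ S, a * s = b := by
  constructor
  · rintro ⟨_, ⟨s, hs, rfl⟩ | ⟨s, rfl⟩, h⟩
    · exact ⟨s, hs, Sum.inl.inj h⟩
    · cases h
  · rintro ⟨s, hs, rfl⟩
    exact ⟨Sum.inl s, Or.inl ⟨s, hs, rfl⟩, rfl⟩

theorem exists_serMul_inl_inr (a : T) (b : S') :
    ∃ s ∈ seriesSub S, Sum.inl a ⋆ s = (Sum.inr b : T ⊕ S') :=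
  ⟨Sum.inr b, Or.inr ⟨b, rfl⟩, rfl⟩

theorem not_exists_serMul_inr_inl (a : S') (b : T) :
    ¬∃ s ∈ seriesSub S, Sum.inr a ⋆ s = (Sum.inl b : T ⊕ S') := by
  rintro ⟨_, ⟨s, -, rfl⟩ | ⟨s, rfl⟩, h⟩ <;> cases h

theorem exists_serMul_inr_inr_iff (hrefl : ∀ a : S', ∃ s, a * s = a) {a b : S'} :
    (∃ s ∈ seriesSub S, Sum.inr a ⋆ s = (Sum.inr b : T ⊕ S')) ↔ ∃ s, a * s = b := by
  constructor
  · rintro ⟨_, ⟨s, -, rfl⟩ | ⟨s, rfl⟩, h⟩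
    · cases h
      exact hrefl a
    · exact ⟨s, Sum.inr.inj h⟩
  · rintro ⟨s, rfl⟩
    exact ⟨Sum.inr s, Or.inr ⟨s, rfl⟩, rfl⟩

theorem exists_serMul_eq_iff (hrefl : ∀ a : S', ∃ s, a * s = a) (x y : T ⊕ S') :
    (∃ s ∈ seriesSub S, x ⋆ s = y) ↔
      ((∃ a b : T, x = Sum.inl a ∧ y = Sum.inl b ∧ ∃ s ∈ S, a * s = b) ∨
       (∃ a b : S', x = Sum.inr a ∧ y = Sum.inr b ∧ ∃ s : S', a * s = b) ∨
       (∃ (a : T) (b : S'), x = Sum.inl a ∧ y = Sum.inr b)) := by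
  rcases x with a | a <;> rcases y with b | b
  · rw [exists_serMul_inl_inl_iff]
    simp only [Sum.inl.injEq, reduceCtorEq, false_and, and_false, exists_false, or_false,
      exists_and_left, exists_eq_left']
  · simpa using exists_serMul_inl_inr a b
  · simpa using not_exists_serMul_inr_inl (S := S) a b
  · rw [exists_serMul_inr_inr_iff hrefl]
    simp only [Sum.inr.injEq, reduceCtorEq, false_and, and_false, exists_false, false_or,
      or_false, exists_and_left, exists_eq_left']

theorem serMul_inl_one {e : T} (he : ∀ t : T, e * t = t ∧ t * e = t) (x : T ⊕ S') :
    Sum.inl e ⋆ x = x ∧ x ⋆ Sum.inl e = x := by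
  rcases x with a | a
  · simp [serMul, (he a).1, (he a).2]
  · simp [serMul]

end SeriesComposition

theorem series_composition_semigroup_poset_general
    (T S' : Type) [Semigroup T] [Semigroup S']
    (S : Subsemigroup T)
    (hord' : IsPartialOrder S' (fun t u => ∃ s : S', t * s = u)) :
    (∀ a b c : T ⊕ S',
      serMul (· * ·) (· * ·) (serMul (· * ·) (· * ·) a b) c =
        serMul (· * ·) (· * ·) a (serMul (· * ·) (· * ·) b c)) ∧
    (∀ a ∈ (Sum.inl '' (S : Set T) ∪ Set.range Sum.inr : Set (T ⊕ S')),
      ∀ b ∈ (Sum.inl '' (S : Set T) ∪ Set.range Sum.inr : Set (T ⊕ S')),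
        serMul (· * ·) (· * ·) a b ∈
          (Sum.inl '' (S : Set T) ∪ Set.range Sum.inr : Set (T ⊕ S'))) ∧
    (∀ x y : T ⊕ S',
      (∃ s ∈ (Sum.inl '' (S : Set T) ∪ Set.range Sum.inr : Set (T ⊕ S')),
          serMul (· * ·) (· * ·) x s = y) ↔
        ((∃ a b : T, x = Sum.inl a ∧ y = Sum.inl b ∧ ∃ s ∈ S, a * s = b) ∨
         (∃ a b : S', x = Sum.inr a ∧ y = Sum.inr b ∧ ∃ s : S', a * s = b) ∨
         (∃ (a : T) (b : S'), x = Sum.inl a ∧ y = Sum.inr b))) ∧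
    ((S : Set T) = Set.univ →
      (Sum.inl '' (S : Set T) ∪ Set.range Sum.inr : Set (T ⊕ S')) = Set.univ) ∧
    ((∃ e : T, e ∈ S ∧ ∀ t : T, e * t = t ∧ t * e = t) →
      ∃ E : T ⊕ S',
        E ∈ (Sum.inl '' (S : Set T) ∪ Set.range Sum.inr : Set (T ⊕ S')) ∧
        ∀ x : T ⊕ S',
          serMul (· * ·) (· * ·) E x = x ∧ serMul (· * ·) (· * ·) x E = x) := by
  refine ⟨serMul_assoc, fun a ha b hb => serMul_mem_seriesSub ha hb,
    exists_serMul_eq_iff hord'.refl, fun hS => ?_, ?_⟩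
  · change seriesSub (S : Set T) = _
    rw [hS, seriesSub_univ]
  · rintro ⟨e, heS, he⟩
    exact ⟨Sum.inl e, Or.inl ⟨e, heS, rfl⟩, serMul_inl_one he⟩

/-- If P ≅ P(T,S) is a semigroup poset and Q ≅ P(S',S') is a full
semigroup poset, then the series composition P * Q is the semigroup poset on
T ⊕ S' with subsemigroup S ∪ S' and mixed products tt' = t't = t'; moreover if
P is full then so is P * Q, and if P is a monoid poset then so is P * Q. -/
theorem series_composition_semigroup_poset
    (T S' : Type) [Semigroup T] [Semigroup S']
    (S : Subsemigroup T)
    (hord : IsPartialOrder T (fun t u => ∃ s ∈ S, t * s = u))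
    (hord' : IsPartialOrder S' (fun t u => ∃ s : S', t * s = u)) :
    (∀ a b c : T ⊕ S',
      serMul (· * ·) (· * ·) (serMul (· * ·) (· * ·) a b) c =
        serMul (· * ·) (· * ·) a (serMul (· * ·) (· * ·) b c)) ∧
    (∀ a ∈ (Sum.inl '' (S : Set T) ∪ Set.range Sum.inr : Set (T ⊕ S')),
      ∀ b ∈ (Sum.inl '' (S : Set T) ∪ Set.range Sum.inr : Set (T ⊕ S')),
        serMul (· * ·) (· * ·) a b ∈
          (Sum.inl '' (S : Set T) ∪ Set.range Sum.inr : Set (T ⊕ S'))) ∧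
    (∀ x y : T ⊕ S',
      (∃ s ∈ (Sum.inl '' (S : Set T) ∪ Set.range Sum.inr : Set (T ⊕ S')),
          serMul (· * ·) (· * ·) x s = y) ↔
        ((∃ a b : T, x = Sum.inl a ∧ y = Sum.inl b ∧ ∃ s ∈ S, a * s = b) ∨
         (∃ a b : S', x = Sum.inr a ∧ y = Sum.inr b ∧ ∃ s : S', a * s = b) ∨
         (∃ (a : T) (b : S'), x = Sum.inl a ∧ y = Sum.inr b))) ∧
    ((S : Set T) = Set.univ →
      (Sum.inl '' (S : Set T) ∪ Set.range Sum.inr : Set (T ⊕ S')) = Set.univ) ∧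
    ((∃ e : T, e ∈ S ∧ ∀ t : T, e * t = t ∧ t * e = t) →
      ∃ E : T ⊕ S',
        E ∈ (Sum.inl '' (S : Set T) ∪ Set.range Sum.inr : Set (T ⊕ S')) ∧
        ∀ x : T ⊕ S',
          serMul (· * ·) (· * ·) E x = x ∧ serMul (· * ·) (· * ·) x E = x) :=
  series_composition_semigroup_poset_general T S' S hord'
end

section
/- Let M be a submonoid of an abelian group, finitely generated and pointed (M ∩ M⁻¹ = {0}). Then the Cayley poset P(M,M), i.e. M ordered by s ≤ t iff t − s ∈ M, is a partial order that is locally finite (every interval [s,t] is finite), has a finite number of atoms (which form the unique minimal generating set of M), and is auto-equivalent via the translations φ_s(x) = s + x. -/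
/-- The Cayley order of P(M,M) for a submonoid M of an abelian group G:
s ≤ t iff t - s ∈ M. -/
def cayleyLE {G : Type} [AddCommGroup G] (M : AddSubmonoid G)
    (s t : ↥M) : Prop := (t : G) - (s : G) ∈ M

/-!
Pointedness of `M` is exactly antisymmetry of the Cayley order, and translation by `s` maps `M`
isomorphically onto the up-set of `s`. The content is finiteness. Pick nonzero generators
`g₁, …, gₙ` of `M` and let `e : ℕⁿ → M`, `v ↦ ∑ vᵢ • gᵢ`. Pointedness forces `e v = 0 → v = 0`,
so every fibre of `e` is an antichain of `ℕⁿ`, hence finite by Dickson's lemma; the elements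
below `t` are images of vectors below the fibre over `t`, so they are finitely many. The atoms of
the Cayley order are the irreducible elements of the monoid `M`, which are finitely many and
generate it.
-/

section FiniteDivisors

variable {ι N : Type*} [AddCommMonoid N] [IsLeftCancelAdd N]

theorem AddMonoidHom.finite_preimage_singleton_of_eq_zero [Finite ι] {e : (ι → ℕ) →+ N}
    (he : ∀ v, e v = 0 → v = 0) (c : N) : (e ⁻¹' {c}).Finite := by
  refine IsAntichain.finite_of_partiallyWellOrderedOn (fun v hv w hw hne hle => hne ?_)
    (Set.isPWO_of_wellQuasiOrderedLE _)
  have hdiff : e (w - v) = 0 := by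
    refine add_eq_left.1 (?_ : e v + e (w - v) = e v)
    rw [← map_add, add_tsub_cancel_of_le hle]
    exact hw.trans hv.symm
  exact le_antisymm hle (tsub_eq_zero_iff_le.1 (he _ hdiff))

theorem AddMonoidHom.finite_setOf_add_eq [Finite ι] {e : (ι → ℕ) →+ N}
    (hsurj : Function.Surjective e) (he : ∀ v, e v = 0 → v = 0) (c : N) :
    {a | ∃ b, a + b = c}.Finite := by
  have := Fintype.ofFinite ι
  classical
  refine (((e.finite_preimage_singleton_of_eq_zero he c).biUnion
    fun u _ => Set.finite_Iic u).image e).subset ?_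
  rintro a ⟨b, rfl⟩
  obtain ⟨v, rfl⟩ := hsurj a
  obtain ⟨w, rfl⟩ := hsurj b
  exact ⟨v, Set.mem_biUnion (x := v + w) (map_add e v w) (Set.mem_Iic.2 le_self_add), rfl⟩

theorem finite_setOf_add_eq [Subsingleton (AddUnits N)] [AddMonoid.FG N] (c : N) :
    {a | ∃ b, a + b = c}.Finite := by
  classical
  obtain ⟨S, hS⟩ := AddMonoid.FG.fg_top (M := N)
  let e := (Fintype.linearCombination ℕ ((↑) : S.erase 0 → N)).toAddMonoidHom
  refine e.finite_setOf_add_eq ?_ (fun v hv => funext fun i => ?_) c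
  · refine (span_range_eq_top_iff_surjective_fintypeLinearCombination ℕ _).1 ?_
    rw [← Submodule.toAddSubmonoid_inj, Submodule.span_nat_eq_addSubmonoidClosure,
      Subtype.range_coe, Finset.coe_erase, AddSubmonoid.closure_sdiff_singleton_zero, hS]
    rfl
  · by_contra hi
    have hsummand : v i • (i : N) = 0 := Finset.sum_eq_zero_iff.1 hv i (Finset.mem_univ _)
    exact (Finset.mem_erase.1 i.2).1 (IsAddUnit.of_nsmul_eq_zero hsummand hi).eq_zero

end FiniteDivisors

section CayleyOrder

variable {G : Type} [AddCommGroup G] {M : AddSubmonoid G}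

theorem cayleyLE_iff_exists_add {s t : M} : cayleyLE M s t ↔ ∃ c, s + c = t :=
  ⟨fun h => ⟨⟨_, h⟩, Subtype.ext (add_sub_cancel _ _)⟩,
    by rintro ⟨c, rfl⟩; simp [cayleyLE]⟩

theorem subsingleton_addUnits_of_pointed (hpointed : ∀ x ∈ M, -x ∈ M → x = 0) :
    Subsingleton (AddUnits M) :=
  Subsingleton.addUnits_of_isAddUnit fun a ⟨u, hu⟩ => Subtype.ext <| hpointed a a.2 <| by
    rw [← hu, neg_eq_of_add_eq_zero_right (congrArg Subtype.val u.add_neg)]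
    exact (↑(-u) : M).2

theorem cayleyLE_zero_left (x : M) : cayleyLE M 0 x := by
  simp [cayleyLE]

theorem cayleyLE_add_left_iff (s a b : M) : cayleyLE M (s + a) (s + b) ↔ cayleyLE M a b := by
  simp [cayleyLE]

theorem range_add_left_eq_setOf_cayleyLE (s : M) :
    Set.range (s + ·) = {t | cayleyLE M s t} := by
  ext t
  simp [cayleyLE_iff_exists_add]

variable [Subsingleton (AddUnits M)]

theorem isPartialOrder_cayleyLE : IsPartialOrder M (cayleyLE M) where
  refl x := cayleyLE_iff_exists_add.2 ⟨0, add_zero x⟩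
  trans x y z := by
    simp only [cayleyLE_iff_exists_add]
    rintro ⟨c, rfl⟩ ⟨d, rfl⟩
    exact ⟨c + d, (add_assoc x c d).symm⟩
  antisymm x y := by
    simp only [cayleyLE_iff_exists_add]
    rintro ⟨c, rfl⟩ ⟨d, hd⟩
    rw [add_assoc, add_eq_left, add_eq_zero] at hd
    rw [hd.1, add_zero]

theorem eq_of_setOf_cayleyLE_eq {s t : M} (h : {x | cayleyLE M s x} = {x | cayleyLE M t x}) :
    s = t :=
  isPartialOrder_cayleyLE.antisymm s t
    ((Set.ext_iff.1 h t).2 (isPartialOrder_cayleyLE.refl t))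
    ((Set.ext_iff.1 h s).1 (isPartialOrder_cayleyLE.refl s))

theorem setOf_cayleyAtom_eq_setOf_addIrreducible :
    {a : M | a ≠ 0 ∧ ∀ b : M, b ≠ 0 → cayleyLE M b a → b = a} = {a | AddIrreducible a} := by
  ext a
  refine ⟨fun ⟨ha0, hmin⟩ => ⟨fun ha => ha0 ha.eq_zero, fun x y hxy => ?_⟩, fun ha => ?_⟩
  · by_cases hx : x = 0
    · exact .inl (hx ▸ isAddUnit_zero)
    · obtain rfl := hmin x hx (cayleyLE_iff_exists_add.2 ⟨y, hxy.symm⟩)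
      exact .inr (isAddUnit_iff_eq_zero.2 (add_eq_left.1 hxy.symm))
  · refine ⟨ha.ne_zero, fun b hb0 hba => ?_⟩
    obtain ⟨c, rfl⟩ := cayleyLE_iff_exists_add.1 hba
    obtain hb | hc := ha.isAddUnit_or_isAddUnit rfl
    · exact absurd hb.eq_zero hb0
    · rw [hc.eq_zero, add_zero]

theorem finite_setOf_cayleyLE [AddMonoid.FG M] (t : M) : {z | cayleyLE M z t}.Finite := by
  simpa only [cayleyLE_iff_exists_add] using finite_setOf_add_eq t

theorem closure_coe_setOf_addIrreducible [AddMonoid.FG M] :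
    AddSubmonoid.closure ((↑) '' {a : M | AddIrreducible a}) = M := by
  -- submonoids only get the unbundled `IsCancelAdd`; `closure_addIrreducible` needs the bundle
  let _ : AddCancelCommMonoid M := {}
  rw [← AddSubmonoid.coe_subtype, ← AddMonoidHom.map_mclosure,
    AddSubmonoid.closure_addIrreducible, ← AddMonoidHom.mrange_eq_map,
    AddSubmonoid.mrange_subtype]

end CayleyOrder

/-- For a finitely generated pointed submonoid M of an abelian
group, the Cayley poset P(M,M) (ordered by s ≤ t iff t - s ∈ M) is a partial
order with global minimum 0, is locally finite, has finitely many atoms which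
generate M, and is auto-equivalent via the translations x ↦ s + x. -/
theorem fg_pointed_submonoid_cayley_poset
    (G : Type) [AddCommGroup G] (M : AddSubmonoid G)
    (hfg : M.FG) (hpointed : ∀ x ∈ M, -x ∈ M → x = 0) :
    -- partial order
    IsPartialOrder ↥M (cayleyLE M) ∧
    -- global minimum
    (∀ x : ↥M, cayleyLE M 0 x) ∧
    -- locally finite
    (∀ s t : ↥M, {z : ↥M | cayleyLE M s z ∧ cayleyLE M z t}.Finite) ∧
    -- finitely many atoms, forming a generating set of M
    {a : ↥M | a ≠ 0 ∧ ∀ b : ↥M, b ≠ 0 → cayleyLE M b a → b = a}.Finite ∧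
    AddSubmonoid.closure
      ((↑) '' {a : ↥M | a ≠ 0 ∧ ∀ b : ↥M, b ≠ 0 → cayleyLE M b a → b = a}) = M ∧
    -- auto-equivalent via the translations φ_s(x) = s + x
    (∃ T : Set (↥M → ↥M),
      (∀ f ∈ T, ∀ x y : ↥M, cayleyLE M x y → cayleyLE M (f x) (f y)) ∧
      id ∈ T ∧
      (∀ f ∈ T, ∀ g ∈ T, f ∘ g ∈ T) ∧
      (∀ f ∈ T, ∀ g ∈ T, f ∘ g = g ∘ f) ∧
      (∀ x : ↥M, ∃! f : ↥M → ↥M, f ∈ T ∧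
        Set.range f = {t : ↥M | cayleyLE M x t} ∧
        (∀ a b : ↥M, cayleyLE M (f a) (f b) ↔ cayleyLE M a b)) ∧
      T = {f : ↥M → ↥M | ∃ s : ↥M, f = fun x => s + x}) := by
  have := subsingleton_addUnits_of_pointed hpointed
  have := (AddMonoid.fg_iff_addSubmonoid_fg M).2 hfg
  rw [setOf_cayleyAtom_eq_setOf_addIrreducible]
  refine ⟨isPartialOrder_cayleyLE, cayleyLE_zero_left,
    fun s t => (finite_setOf_cayleyLE t).subset fun z hz => hz.2, finite_addIrreducible,
    closure_coe_setOf_addIrreducible, {f | ∃ s : M, f = (s + ·)}, ?_,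
    ⟨0, funext fun x => (zero_add x).symm⟩, ?_, ?_, ?_, rfl⟩
  · rintro f ⟨s, rfl⟩ x y
    exact (cayleyLE_add_left_iff s x y).2
  · rintro f ⟨s, rfl⟩ g ⟨t, rfl⟩
    exact ⟨s + t, funext fun x => (add_assoc s t x).symm⟩
  · rintro f ⟨s, rfl⟩ g ⟨t, rfl⟩
    exact funext fun x => add_left_comm s t x
  · refine fun x => ⟨(x + ·), ⟨⟨x, rfl⟩, range_add_left_eq_setOf_cayleyLE x,
      cayleyLE_add_left_iff x⟩, ?_⟩
    rintro f ⟨⟨s, rfl⟩, hrange, -⟩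
    rw [range_add_left_eq_setOf_cayleyLE] at hrange
    rw [eq_of_setOf_cayleyLE_eq hrange]
end
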